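/- arXiv:1712.02999 — 6 statements merged into one kernel-verified Lean document; each statement's English description precedes it below -/
import Mathlib

section
/- Let Z be a binomial random variable with parameters n ≥ 1 and p ∈ (0,1). Then E[1_{Z ≥ 1}/√Z] ≤ ω(p)/√(2np), where ω(p) := min_{u ∈ (0,1)} ( √(2/u) + √(1/(2ep))·1/(1-u) ). -/
/-!
The bound holds with `2` in place of `ω(p)`, and `ω(p) ≥ 2`. Indeed `1_{k ≥ 1}/√k ≤ √(2/(k+1))`,
Jensen for the concave square root gives `E √(2/(Z+1)) ≤ √(2 E[1/(Z+1)])`, and the identity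
`C(n,k)/(k+1) = C(n+1,k+1)/(n+1)` turns `E[1/(Z+1)]` into `(1 - (1-p)^(n+1))/((n+1)p) ≤ 1/(np)`.
-/

open MeasureTheory ProbabilityTheory Finset

/-- The function `ω(p) = inf_{u ∈ (0,1)} ( √(2/u) + √(1/(2ep))·1/(1-u) )`. -/
noncomputable def omegaFun (p : ℝ) : ℝ :=
  sInf {y : ℝ | ∃ u : ℝ, 0 < u ∧ u < 1 ∧
    y = Real.sqrt (2 / u) + Real.sqrt (1 / (2 * Real.exp 1 * p)) * (1 / (1 - u))}

lemma two_le_sqrt_two_div_add {u c : ℝ} (hu0 : 0 < u) (hu1 : u < 1) (hc : 3 / 10 ≤ c) :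
    2 ≤ √(2 / u) + c * (1 / (1 - u)) := by
  have h1u : 0 < 1 - u := by linarith
  rcases le_or_gt u (1 / 2) with hu | hu
  · have h4 : 2 ≤ √(2 / u) :=
      Real.le_sqrt_of_sq_le (by rw [le_div_iff₀ hu0]; linarith)
    have : 0 ≤ c * (1 / (1 - u)) := by positivity
    linarith
  · have hsqrt2 : 1.4 ≤ √(2 / u) :=
      Real.le_sqrt_of_sq_le (by rw [le_div_iff₀ hu0]; nlinarith)
    have hinv : 2 ≤ 1 / (1 - u) := by rw [le_div_iff₀ h1u]; linarith
    nlinarith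

lemma two_le_omegaFun {p : ℝ} (hp0 : 0 < p) (hp1 : p < 1) : 2 ≤ omegaFun p := by
  refine le_csInf ⟨_, 1 / 2, by norm_num, by norm_num, rfl⟩ ?_
  rintro y ⟨u, hu0, hu1, rfl⟩
  refine two_le_sqrt_two_div_add hu0 hu1 (Real.le_sqrt_of_sq_le ?_)
  have he : Real.exp 1 < 3 := lt_trans Real.exp_one_lt_d9 (by norm_num)
  rw [le_div_iff₀ (by positivity)]
  nlinarith [Real.exp_pos 1]

lemma integral_comp_eq_sum_of_le {Ω : Type*} [MeasurableSpace Ω] (μ : Measure Ω)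
    [IsFiniteMeasure μ] {n : ℕ} {Z : Ω → ℕ} (hZ : Measurable Z) (hle : ∀ ω, Z ω ≤ n)
    (g : ℕ → ℝ) :
    ∫ ω, g (Z ω) ∂μ = ∑ k ∈ range (n + 1), (μ {ω | Z ω = k}).toReal * g k := by
  have hlevel : ∀ k : ℕ, MeasurableSet {ω | Z ω = k} := fun k => hZ (measurableSet_singleton k)
  have hdecomp : (fun ω => g (Z ω)) =
      fun ω => ∑ k ∈ range (n + 1), {ω' | Z ω' = k}.indicator (fun _ => g k) ω := by
    funext ω
    simp only [Set.indicator_apply, Set.mem_ofPred_eq, sum_ite_eq, mem_range,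
      if_pos (Nat.lt_succ_of_le (hle ω))]
  rw [hdecomp, integral_finsetSum _ fun k _ => (integrable_const (g k)).indicator (hlevel k)]
  refine sum_congr rfl fun k _ => ?_
  rw [integral_indicator_const _ (hlevel k), smul_eq_mul, measureReal_def]

lemma ite_one_div_sqrt_le (k : ℕ) :
    (if 1 ≤ k then 1 / √(k : ℝ) else 0) ≤ √(2 / (k + 1)) := by
  split_ifs with hk
  · have hk' : (1 : ℝ) ≤ k := by exact_mod_cast hk
    rw [← Real.sqrt_one, ← Real.sqrt_div' _ (by positivity : (0 : ℝ) ≤ k), Real.sqrt_one]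
    exact Real.sqrt_le_sqrt (by rw [div_le_div_iff₀ (by positivity) (by positivity)]; linarith)
  · positivity

noncomputable def binomWeight (n : ℕ) (p : ℝ) (k : ℕ) : ℝ :=
  n.choose k * p ^ k * (1 - p) ^ (n - k)

section binomWeight

variable {n : ℕ} {p : ℝ}

lemma binomWeight_nonneg (hp0 : 0 ≤ p) (hp1 : p ≤ 1) (k : ℕ) : 0 ≤ binomWeight n p k := by
  have : 0 ≤ 1 - p := by linarith
  unfold binomWeight
  positivity

lemma sum_binomWeight (n : ℕ) (p : ℝ) : ∑ k ∈ range (n + 1), binomWeight n p k = 1 := by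
  calc ∑ k ∈ range (n + 1), binomWeight n p k = (p + (1 - p)) ^ n := by
        rw [add_pow]; exact sum_congr rfl fun k _ => by unfold binomWeight; ring
    _ = 1 := by ring

lemma binomWeight_div_succ (hp : p ≠ 0) {k : ℕ} (hk : k ≤ n) :
    binomWeight n p k / (k + 1) = binomWeight (n + 1) p (k + 1) / ((n + 1) * p) := by
  have hchoose : ((n : ℝ) + 1) * n.choose k = (n + 1).choose (k + 1) * ((k : ℝ) + 1) := by
    exact_mod_cast Nat.add_one_mul_choose_eq n k
  unfold binomWeight
  rw [show n + 1 - (k + 1) = n - k by omega, div_eq_div_iff (by positivity) (by positivity)]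
  linear_combination p ^ (k + 1) * (1 - p) ^ (n - k) * hchoose

lemma sum_binomWeight_div_succ_le (hp0 : 0 < p) (hp1 : p ≤ 1) :
    ∑ k ∈ range (n + 1), binomWeight n p k / (k + 1) ≤ 1 / ((n + 1) * p) := by
  have hshift : ∑ k ∈ range (n + 1), binomWeight (n + 1) p (k + 1)
      = 1 - binomWeight (n + 1) p 0 := by
    rw [eq_sub_iff_add_eq, ← sum_range_succ' (binomWeight (n + 1) p), sum_binomWeight]
  rw [sum_congr rfl fun k hk => binomWeight_div_succ hp0.ne' (Nat.lt_succ_iff.mp (mem_range.mp hk)),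
    ← sum_div, hshift]
  gcongr
  linarith [binomWeight_nonneg (n := n + 1) hp0.le hp1 0]

lemma sum_binomWeight_mul_sqrt_le (hp0 : 0 < p) (hp1 : p ≤ 1) :
    ∑ k ∈ range (n + 1), binomWeight n p k * √(2 / (k + 1)) ≤ √(2 / ((n + 1) * p)) := by
  have hw := binomWeight_nonneg (n := n) hp0.le hp1
  calc ∑ k ∈ range (n + 1), binomWeight n p k * √(2 / (k + 1))
      ≤ √(∑ k ∈ range (n + 1), binomWeight n p k * (2 / (k + 1))) :=
        Real.strictConcaveOn_sqrt.concaveOn.le_map_sum (fun k _ => hw k) (sum_binomWeight n p)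
          fun k _ => Set.mem_Ici.mpr (by positivity)
    _ = √(2 * ∑ k ∈ range (n + 1), binomWeight n p k / (k + 1)) := by
        rw [mul_sum]; congr 1; exact sum_congr rfl fun k _ => by ring
    _ ≤ √(2 * (1 / ((n + 1) * p))) := by gcongr; exact sum_binomWeight_div_succ_le hp0 hp1
    _ = √(2 / ((n + 1) * p)) := by rw [mul_one_div]

end binomWeight

lemma sqrt_two_div_eq_two_div_sqrt {x : ℝ} (hx : 0 < x) : √(2 / x) = 2 / √(2 * x) := by
  rw [eq_div_iff (by positivity), ← Real.sqrt_mul (by positivity),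
    show 2 / x * (2 * x) = 2 ^ 2 by field_simp, Real.sqrt_sq zero_le_two]

theorem stmt_1 {Ω : Type*} [MeasureSpace Ω] [IsProbabilityMeasure (ℙ : Measure Ω)]
    (n : ℕ) (hn : 1 ≤ n) (p : ℝ) (hp0 : 0 < p) (hp1 : p < 1)
    (Z : Ω → ℕ) (hmeas : Measurable Z) (hle : ∀ ω, Z ω ≤ n)
    (hbinom : ∀ k : ℕ, k ≤ n →
      (ℙ {ω | Z ω = k}).toReal = (n.choose k : ℝ) * p ^ k * (1 - p) ^ (n - k)) :
    (∫ ω, (if 1 ≤ Z ω then 1 / Real.sqrt (Z ω) else 0) ∂ℙ)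
      ≤ omegaFun p / Real.sqrt (2 * n * p) := by
  have hnp : (0 : ℝ) < n * p := by positivity
  calc (∫ ω, (if 1 ≤ Z ω then 1 / Real.sqrt (Z ω) else 0) ∂ℙ)
      = ∑ k ∈ range (n + 1), binomWeight n p k * (if 1 ≤ k then 1 / √(k : ℝ) else 0) := by
        rw [integral_comp_eq_sum_of_le ℙ hmeas hle fun k => if 1 ≤ k then 1 / √(k : ℝ) else 0]
        exact sum_congr rfl fun k hk => by
          rw [hbinom k (Nat.lt_succ_iff.mp (mem_range.mp hk)), binomWeight]
    _ ≤ ∑ k ∈ range (n + 1), binomWeight n p k * √(2 / (k + 1)) :=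
        sum_le_sum fun k _ => mul_le_mul_of_nonneg_left (ite_one_div_sqrt_le k)
          (binomWeight_nonneg hp0.le hp1.le k)
    _ ≤ √(2 / ((n + 1) * p)) := sum_binomWeight_mul_sqrt_le hp0 hp1.le
    _ ≤ √(2 / (n * p)) := by gcongr; linarith
    _ = 2 / √(2 * n * p) := by rw [sqrt_two_div_eq_two_div_sqrt hnp, mul_assoc]
    _ ≤ omegaFun p / √(2 * n * p) := by gcongr; exact two_le_omegaFun hp0 hp1
end

section
/- Let Z be a binomial random variable with parameters n and p, and let u ∈ (0,1). Then E[1_{Z ≥ 1}/√Z] ≤ (1/√(npu))·(1 + √(npu)·exp(-2n(1-u)²p²)). -/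
/-!
On the event `Z ≥ m := npu` the integrand is at most `1/√m`; below it, it is at most
`1 ≤ exp (t (m - Z))` for every `t ≥ 0`. Taking expectations bounds the left side by
`1/√m + exp (t m) (p e⁻ᵗ + 1 - p)ⁿ`, and Hoeffding's lemma for a Bernoulli variable gives
`p e⁻ᵗ + 1 - p ≤ exp (t²/8 - t p)`. The choice `t = 4p(1 - u)` turns the exponent into
`-2n(1 - u)²p²`.
-/

open MeasureTheory ProbabilityTheory Real Finset

theorem bernoulli_mgf_le {p : ℝ} (hp0 : 0 ≤ p) (hp1 : p ≤ 1) (t : ℝ) :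
    p * exp (-t) + (1 - p) ≤ exp (t ^ 2 / 8 - t * p) := by
  let μ : Measure ℝ := Ber(1, 0, ⟨p, hp0, hp1⟩)
  have hbdd : ∀ᵐ x ∂μ, x ∈ Set.Icc (0 : ℝ) 1 := by
    rw [ae_iff]
    exact bernoulliMeasure_apply_of_notMem_of_notMem _ measurableSet_Icc.compl (by simp) (by simp)
  have hoeffding := (hasSubgaussianMGF_of_mem_Icc aemeasurable_id hbdd).mgf_le (-t)
  have hmgf : mgf (fun x ↦ id x - μ[id]) μ (-t) = exp (t * p) * (p * exp (-t) + (1 - p)) := by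
    simp only [mgf, μ, integral_bernoulliMeasure, id, smul_eq_mul]
    rw [mul_add, ← mul_assoc, mul_comm (exp _) p, mul_assoc, ← exp_add]
    ring_nf
  rw [hmgf, ← le_div_iff₀' (exp_pos _), ← exp_sub] at hoeffding
  refine hoeffding.trans_eq (congrArg exp ?_)
  norm_num
  ring

theorem sum_choose_mul_pow_mul_pow (n : ℕ) (p x : ℝ) :
    ∑ k ∈ range (n + 1), x ^ k * (n.choose k * p ^ k * (1 - p) ^ (n - k)) =
      (p * x + (1 - p)) ^ n := by
  rw [add_pow]
  exact sum_congr rfl fun k _ ↦ by ring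

theorem sum_const_add_mul_pow_mul_choose (n : ℕ) (p a b x : ℝ) :
    ∑ k ∈ range (n + 1), (a + b * x ^ k) * (n.choose k * p ^ k * (1 - p) ^ (n - k)) =
      a + b * (p * x + (1 - p)) ^ n := by
  have htotal := sum_choose_mul_pow_mul_pow n p 1
  simp only [one_pow, one_mul, mul_one, add_sub_cancel] at htotal
  simp only [add_mul, mul_assoc b, sum_add_distrib, ← mul_sum, htotal,
    sum_choose_mul_pow_mul_pow, mul_one]

theorem integral_comp_eq_sum_measureReal {Ω : Type*} [MeasurableSpace Ω] (μ : Measure Ω)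
    [IsFiniteMeasure μ] {n : ℕ} {Z : Ω → ℕ} (hZ : Measurable Z) (hle : ∀ ω, Z ω ≤ n)
    (g : ℕ → ℝ) :
    ∫ ω, g (Z ω) ∂μ = ∑ k ∈ range (n + 1), g k * μ.real {ω | Z ω = k} := by
  have hlevel (k : ℕ) : MeasurableSet {ω | Z ω = k} := hZ (measurableSet_singleton k)
  have hsplit (ω : Ω) :
      g (Z ω) = ∑ k ∈ range (n + 1), {ω | Z ω = k}.indicator (fun _ ↦ g k) ω := by
    rw [sum_eq_single_of_mem (Z ω) (mem_range.2 (Nat.lt_succ_of_le (hle ω)))]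
    · simp
    · exact fun k _ hk ↦ Set.indicator_of_notMem (Ne.symm hk) _
  simp_rw [hsplit]
  rw [integral_finsetSum _ fun k _ ↦ (integrable_const (g k)).indicator (hlevel k)]
  refine sum_congr rfl fun k _ ↦ ?_
  rw [integral_indicator_const _ (hlevel k), smul_eq_mul, mul_comm]

theorem ite_one_div_sqrt_le_s2 {m t : ℝ} (hm : 0 < m) (ht : 0 ≤ t) (k : ℕ) :
    (if 1 ≤ k then 1 / √(k : ℝ) else 0) ≤ 1 / √m + exp (t * m) * exp (-t) ^ k := by
  rw [← exp_nat_mul, ← exp_add]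
  have hexp := exp_pos (t * m + k * -t)
  split_ifs with hk
  · rcases le_total m k with hmk | hkm
    · have : 1 / √(k : ℝ) ≤ 1 / √m :=
        one_div_le_one_div_of_le (sqrt_pos.2 hm) (sqrt_le_sqrt hmk)
      linarith
    · have hk' : (1 : ℝ) ≤ k := by exact_mod_cast hk
      have h1 : 1 / √(k : ℝ) ≤ 1 := by
        rw [div_le_one (by positivity)]
        exact one_le_sqrt.2 hk'
      have h2 : 1 ≤ exp (t * m + k * -t) := one_le_exp (by nlinarith)
      have h3 : 0 ≤ 1 / √m := by positivity
      linarith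
  · positivity

theorem stmt_2 {Ω : Type*} [MeasureSpace Ω] [IsProbabilityMeasure (ℙ : Measure Ω)]
    (n : ℕ) (hn : 1 ≤ n) (p : ℝ) (hp0 : 0 < p) (hp1 : p < 1)
    (u : ℝ) (hu0 : 0 < u) (hu1 : u < 1)
    (Z : Ω → ℕ) (hmeas : Measurable Z) (hle : ∀ ω, Z ω ≤ n)
    (hbinom : ∀ k : ℕ, k ≤ n →
      (ℙ {ω | Z ω = k}).toReal = (n.choose k : ℝ) * p ^ k * (1 - p) ^ (n - k)) :
    (∫ ω, (if 1 ≤ Z ω then 1 / Real.sqrt (Z ω) else 0) ∂ℙ)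
      ≤ (1 / Real.sqrt (n * p * u)) *
        (1 + Real.sqrt (n * p * u) * Real.exp (-2 * n * (1 - u) ^ 2 * p ^ 2)) := by
  set m : ℝ := n * p * u
  set t : ℝ := 4 * p * (1 - u)
  have hm : 0 < m := mul_pos (mul_pos (by exact_mod_cast hn) hp0) hu0
  have ht : 0 ≤ t := mul_nonneg (by positivity) (by linarith)
  have hexponent : t * m + n * (t ^ 2 / 8 - t * p) = -2 * n * (1 - u) ^ 2 * p ^ 2 := by
    simp only [m, t]
    ring
  calc (∫ ω, (if 1 ≤ Z ω then 1 / √(Z ω : ℝ) else 0) ∂ℙ)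
      = ∑ k ∈ range (n + 1), (if 1 ≤ k then 1 / √(k : ℝ) else 0) *
          (n.choose k * p ^ k * (1 - p) ^ (n - k)) := by
        rw [integral_comp_eq_sum_measureReal _ hmeas hle fun k ↦ if 1 ≤ k then 1 / √(k : ℝ) else 0]
        refine sum_congr rfl fun k hk ↦ ?_
        rw [measureReal_def, hbinom k (Nat.lt_succ_iff.1 (mem_range.1 hk))]
    _ ≤ ∑ k ∈ range (n + 1), (1 / √m + exp (t * m) * exp (-t) ^ k) *
          (n.choose k * p ^ k * (1 - p) ^ (n - k)) :=
        sum_le_sum fun k _ ↦ mul_le_mul_of_nonneg_right (ite_one_div_sqrt_le_s2 hm ht k)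
          (by positivity)
    _ = 1 / √m + exp (t * m) * (p * exp (-t) + (1 - p)) ^ n :=
        sum_const_add_mul_pow_mul_choose n p _ _ _
    _ ≤ 1 / √m + exp (t * m) * exp (t ^ 2 / 8 - t * p) ^ n := by
        gcongr
        exact bernoulli_mgf_le hp0.le hp1.le t
    _ = 1 / √m * (1 + √m * exp (-2 * n * (1 - u) ^ 2 * p ^ 2)) := by
        rw [← exp_nat_mul, ← exp_add, hexponent]
        field_simp
end

section
/- The function ω(p) := min_{u ∈ (0,1)}( √(2/u) + √(1/(2ep))·1/(1-u) ) satisfies ω(p) ~ √(1/(2ep)) as p → 0, i.e., lim_{p→0} ω(p)·√(2ep) = 1. -/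
/-!
Write `x = 2ep`. Since `1/(1-u) ≥ 1`, every value in the infimum is at least `√(1/x)`,
so `ω(p)·√x ≥ 1`. Conversely, for each fixed `u` we get `ω(p)·√x ≤ √(2x/u) + 1/(1-u)`,
which tends to `1/(1-u)` as `p → 0`; letting `u → 0` this is arbitrarily close to `1`.
-/

open Filter Topology Real

theorem sqrt_le_omegaFun (p : ℝ) : √(1 / (2 * exp 1 * p)) ≤ omegaFun p := by
  refine le_csInf ⟨_, 1 / 2, by norm_num, by norm_num, rfl⟩ ?_
  rintro y ⟨u, hu, hu1, rfl⟩
  have h1u : 1 ≤ 1 / (1 - u) := by rw [le_div_iff₀ (by linarith)]; linarith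
  have := le_mul_of_one_le_right (sqrt_nonneg (1 / (2 * exp 1 * p))) h1u
  linarith [sqrt_nonneg (2 / u)]

theorem omegaFun_le (p : ℝ) {u : ℝ} (hu : 0 < u) (hu1 : u < 1) :
    omegaFun p ≤ √(2 / u) + √(1 / (2 * exp 1 * p)) * (1 / (1 - u)) := by
  refine csInf_le ⟨0, ?_⟩ ⟨u, hu, hu1, rfl⟩
  rintro y ⟨v, hv, hv1, rfl⟩
  have : 0 ≤ 1 / (1 - v) := by rw [one_div_nonneg]; linarith
  positivity

theorem sqrt_one_div_mul_sqrt {x : ℝ} (hx : 0 < x) : √(1 / x) * √x = 1 := by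
  rw [one_div, sqrt_inv, inv_mul_cancel₀ (sqrt_ne_zero'.mpr hx)]

theorem one_le_omegaFun_mul_sqrt {p : ℝ} (hp : 0 < p) :
    1 ≤ omegaFun p * √(2 * exp 1 * p) := by
  calc 1 = √(1 / (2 * exp 1 * p)) * √(2 * exp 1 * p) :=
        (sqrt_one_div_mul_sqrt (by positivity)).symm
    _ ≤ omegaFun p * √(2 * exp 1 * p) :=
      mul_le_mul_of_nonneg_right (sqrt_le_omegaFun p) (sqrt_nonneg _)

theorem omegaFun_mul_sqrt_le {p u : ℝ} (hp : 0 < p) (hu : 0 < u) (hu1 : u < 1) :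
    omegaFun p * √(2 * exp 1 * p) ≤ √(2 / u) * √(2 * exp 1 * p) + 1 / (1 - u) := by
  have hx : 0 < 2 * exp 1 * p := by positivity
  calc omegaFun p * √(2 * exp 1 * p)
      ≤ (√(2 / u) + √(1 / (2 * exp 1 * p)) * (1 / (1 - u))) * √(2 * exp 1 * p) :=
        mul_le_mul_of_nonneg_right (omegaFun_le p hu hu1) (sqrt_nonneg _)
    _ = √(2 / u) * √(2 * exp 1 * p) + 1 / (1 - u) := by
        rw [add_mul, mul_right_comm (√(1 / _)), sqrt_one_div_mul_sqrt hx, one_mul]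

theorem stmt_4 :
    Filter.Tendsto (fun p : ℝ => omegaFun p * Real.sqrt (2 * Real.exp 1 * p))
      (nhdsWithin 0 (Set.Ioi 0)) (nhds 1) := by
  refine tendsto_order.2 ⟨fun a ha => ?_, fun a ha => ?_⟩
  · filter_upwards [self_mem_nhdsWithin] with p hp
    exact ha.trans_le (one_le_omegaFun_mul_sqrt hp)
  · have h_inv : Tendsto (fun u : ℝ => 1 / (1 - u)) (𝓝[>] 0) (𝓝 1) := by
      have : ContinuousAt (fun u : ℝ => 1 / (1 - u)) 0 := by fun_prop (disch := norm_num)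
      simpa using this.tendsto.mono_left nhdsWithin_le_nhds
    obtain ⟨u, hua, hu, hu1⟩ :=
      ((h_inv.eventually_lt_const ha).and (Ioo_mem_nhdsGT one_pos)).exists
    have h_bound : Tendsto (fun p => √(2 / u) * √(2 * exp 1 * p) + 1 / (1 - u))
        (𝓝[>] 0) (𝓝 (1 / (1 - u))) := by
      have : Continuous fun p => √(2 / u) * √(2 * exp 1 * p) + 1 / (1 - u) := by fun_prop
      simpa using (this.tendsto 0).mono_left nhdsWithin_le_nhds
    filter_upwards [h_bound.eventually_lt_const hua, self_mem_nhdsWithin] with p hp_lt hp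
    exact (omegaFun_mul_sqrt_le hp hu hu1).trans_lt hp_lt
end

section
/- Let (τ_k)_{k≥1} be i.i.d. nonnegative real random variables and A_{2i+1} := τ_1 + Σ_{k=1}^{i}(τ_{2k+1} - τ_{2k}). Then for every i ≥ 0 and x ∈ ℝ, P( max_{1 ≤ l ≤ 2i+1} A_l ≥ x ) ≤ 2·P( A_{2i+1} ≥ x ), where A_l = Σ_{k=1}^{l}(-1)^{k-1} τ_k. -/
/-!
The partial sums `S j := A_{2j+1}` form a random walk with symmetric increments
`τ_{2m+3} - τ_{2m+2}`, and since the `τ_k` are nonnegative every even partial sum `A_{2m}` is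
dominated by `A_{2m+1}`, so only the odd indices matter in the maximum. For the walk `S` this is
Lévy's maximal inequality: split according to the first index `j` with `x ≤ S j`; that event is
determined by `τ_1, …, τ_{2j+1}`, while `S i - S j` depends only on later coordinates and is
symmetric, hence nonnegative with probability at least `1/2` independently of the event.
-/

open MeasureTheory ProbabilityTheory Finset Function

/-- `altSum t l = t 1 - t 2 + t 3 - ⋯ ± t l`, the paper's `A_l`. -/
def altSum (t : ℕ → ℝ) (l : ℕ) : ℝ :=
  ∑ k ∈ range l, (-1) ^ k * t (k + 1)

def sumPairIncrements (s : Finset ℕ) (t : ℕ → ℝ) : ℝ :=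
  ∑ m ∈ s, (t (2 * m + 3) - t (2 * m + 2))

lemma altSum_two_mul_le {t : ℕ → ℝ} (m : ℕ) (ht : 0 ≤ t (2 * m + 1)) :
    altSum t (2 * m) ≤ altSum t (2 * m + 1) := by
  simp only [altSum, sum_range_succ, (even_two_mul m).neg_one_pow, one_mul]
  linarith

lemma altSum_odd_sub_odd (t : ℕ → ℝ) {j n : ℕ} (hjn : j ≤ n) :
    altSum t (2 * n + 1) - altSum t (2 * j + 1) = sumPairIncrements (Ico j n) t := by
  induction n, hjn using Nat.le_induction with
  | base => simp [sumPairIncrements]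
  | succ n hjn ih =>
    rw [sumPairIncrements, sum_Ico_succ_top hjn, ← sumPairIncrements, ← ih]
    simp only [altSum, show 2 * (n + 1) + 1 = 2 * n + 1 + 1 + 1 by ring, sum_range_succ,
      pow_succ, (even_two_mul n).neg_one_pow]
    ring_nf

lemma measurable_altSum (l : ℕ) : Measurable fun t : ℕ → ℝ => altSum t l :=
  Finset.measurable_sum _ fun k _ => (measurable_pi_apply (k + 1)).const_mul _

lemma measurable_sumPairIncrements (s : Finset ℕ) : Measurable (sumPairIncrements s) :=
  Finset.measurable_sum _ fun m _ => (measurable_pi_apply (2 * m + 3)).sub (measurable_pi_apply _)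

lemma dependsOn_altSum (l : ℕ) : DependsOn (fun t : ℕ → ℝ => altSum t l) (range (l + 1)) :=
  fun t t' h => sum_congr rfl fun k hk => by
    rw [h (k + 1) (by simpa using mem_range.mp hk)]

lemma dependsOn_sumPairIncrements (j n : ℕ) :
    DependsOn (sumPairIncrements (Ico j n)) (Icc (2 * j + 2) (2 * n + 1)) :=
  fun t t' h => sum_congr rfl fun m hm => by
    have hm := mem_Ico.mp hm
    rw [h (2 * m + 3) (by rw [coe_Icc, Set.mem_Icc]; omega),
      h (2 * m + 2) (by rw [coe_Icc, Set.mem_Icc]; omega)]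

def swapPairs (k : ℕ) : ℕ := if k % 2 = 0 then k + 1 else k - 1

lemma swapPairs_injective : Injective swapPairs := by
  intro a b h
  simp only [swapPairs] at h
  split_ifs at h <;> omega

lemma sumPairIncrements_comp_swapPairs (s : Finset ℕ) (t : ℕ → ℝ) :
    sumPairIncrements s (t ∘ swapPairs) = -sumPairIncrements s t := by
  rw [sumPairIncrements, sumPairIncrements, ← sum_neg_distrib]
  refine sum_congr rfl fun m _ => ?_
  have h₂ : swapPairs (2 * m + 2) = 2 * m + 3 := by unfold swapPairs; split_ifs <;> omega
  have h₃ : swapPairs (2 * m + 3) = 2 * m + 2 := by unfold swapPairs; split_ifs <;> omega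
  rw [comp_apply, comp_apply, h₂, h₃, neg_sub]

namespace ProbabilityTheory

section Independence

variable {Ω ι β : Type*} {mΩ : MeasurableSpace Ω} {μ : Measure Ω} [MeasurableSpace β]
  {X : ι → Ω → β}

lemma iIndepFun.indepFun_of_dependsOn {γ δ : Type*} [Nonempty β] [MeasurableSpace γ]
    [MeasurableSpace δ] (hX : ∀ i, Measurable (X i)) (h : iIndepFun X μ)
    {s t : Finset ι} (hst : Disjoint s t) {F : (ι → β) → γ} {G : (ι → β) → δ}
    (hF : Measurable F) (hG : Measurable G) (hFs : DependsOn F s) (hGt : DependsOn G t) :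
    IndepFun (fun ω => F (X · ω)) (fun ω => G (X · ω)) μ := by
  classical
  obtain ⟨b⟩ := ‹Nonempty β›
  have hF' : (fun ω => F (X · ω)) =
      (F ∘ updateFinset (fun _ => b) s) ∘ fun ω (i : s) => X i ω := by
    ext ω
    exact hFs fun i hi => by simp [updateFinset, mem_coe.mp hi]
  have hG' : (fun ω => G (X · ω)) =
      (G ∘ updateFinset (fun _ => b) t) ∘ fun ω (i : t) => X i ω := by
    ext ω
    exact hGt fun i hi => by simp [updateFinset, mem_coe.mp hi]
  rw [hF', hG']
  exact (h.indepFun_finset s t hst hX).comp (hF.comp measurable_updateFinset)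
    (hG.comp measurable_updateFinset)

lemma iIndepFun.identDistrib_precomp (hX : ∀ i, Measurable (X i))
    (h : iIndepFun X μ) {σ : ι → ι} (hσ : σ.Injective)
    (hident : ∀ i, IdentDistrib (X (σ i)) (X i) μ μ) :
    IdentDistrib (fun ω i => X (σ i) ω) (fun ω i => X i ω) μ μ where
  aemeasurable_fst := (measurable_pi_lambda _ fun i => hX (σ i)).aemeasurable
  aemeasurable_snd := (measurable_pi_lambda _ hX).aemeasurable
  map_eq := by
    rw [(h.precomp hσ).map_fun_eq_infinitePi_map (fun i => hX (σ i)),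
      h.map_fun_eq_infinitePi_map hX]
    simp only [(hident _).map_eq]

lemma IdentDistrib.one_le_two_mul_measure_nonneg [IsProbabilityMeasure μ] {Y : Ω → ℝ}
    (h : IdentDistrib Y (-Y) μ μ) : 1 ≤ 2 * μ {ω | 0 ≤ Y ω} := by
  have hsymm : μ {ω | Y ω ≤ 0} = μ {ω | 0 ≤ Y ω} := by
    simpa [Set.preimage, neg_nonneg] using
      (h.measure_mem_eq (measurableSet_Ici (a := (0 : ℝ)))).symm
  have hcover : {ω | 0 ≤ Y ω} ∪ {ω | Y ω ≤ 0} = Set.univ :=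
    Set.eq_univ_of_forall fun ω => le_total 0 (Y ω)
  calc 1 = μ ({ω | 0 ≤ Y ω} ∪ {ω | Y ω ≤ 0}) := by rw [hcover, measure_univ]
    _ ≤ μ {ω | 0 ≤ Y ω} + μ {ω | Y ω ≤ 0} := measure_union_le _ _
    _ = 2 * μ {ω | 0 ≤ Y ω} := by rw [hsymm, two_mul]

end Independence

section LevyInequality

variable {Ω : Type*} {mΩ : MeasurableSpace Ω} {μ : Measure Ω} {S : ℕ → Ω → ℝ}
  {x : ℝ}

def firstCrossing (S : ℕ → Ω → ℝ) (x : ℝ) (j : ℕ) : Set Ω :=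
  {ω | x ≤ S j ω ∧ ∀ m < j, S m ω < x}

def crossesAtLast (x : ℝ) (j : ℕ) : Set (Fin (j + 1) → ℝ) :=
  {v | x ≤ v (Fin.last j)} ∩ ⋂ m : Fin j, {v | v m.castSucc < x}

lemma measurableSet_crossesAtLast (x : ℝ) (j : ℕ) : MeasurableSet (crossesAtLast x j) :=
  (measurableSet_le measurable_const (measurable_pi_apply _)).inter <|
    MeasurableSet.iInter fun _ => measurableSet_lt (measurable_pi_apply _) measurable_const

lemma firstCrossing_eq_preimage (S : ℕ → Ω → ℝ) (x : ℝ) (j : ℕ) :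
    firstCrossing S x j = (fun ω (m : Fin (j + 1)) => S m ω) ⁻¹' crossesAtLast x j := by
  ext ω
  simp [firstCrossing, crossesAtLast, Fin.forall_iff]

lemma measurableSet_firstCrossing (hS : ∀ j, Measurable (S j)) (j : ℕ) :
    MeasurableSet (firstCrossing S x j) := by
  rw [firstCrossing_eq_preimage]
  exact measurable_pi_lambda (fun ω (m : Fin (j + 1)) => S m ω) (fun m => hS m)
    (measurableSet_crossesAtLast x j)

lemma pairwise_disjoint_firstCrossing : Pairwise (Disjoint on (firstCrossing S x)) := by
  intro a b hab
  wlog hlt : a < b generalizing a b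
  · exact (this hab.symm (hab.lt_or_gt.resolve_left hlt)).symm
  exact Set.disjoint_left.mpr fun ω ha hb => (hb.2 a hlt).not_ge ha.1

lemma setOf_exists_le_subset_biUnion_firstCrossing (n : ℕ) :
    {ω | ∃ j ≤ n, x ≤ S j ω} ⊆ ⋃ j ∈ range (n + 1), firstCrossing S x j := by
  classical
  rintro ω ⟨j, hjn, hj⟩
  have hex : ∃ j, x ≤ S j ω := ⟨j, hj⟩
  refine Set.mem_biUnion (x := Nat.find hex) (mem_range.mpr ?_) ⟨Nat.find_spec hex, ?_⟩
  · exact Nat.lt_succ_of_le ((Nat.find_le hj).trans hjn)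
  · exact fun m hm => lt_of_not_ge (Nat.find_min hex hm)

lemma measure_firstCrossing_le {j n : ℕ}
    (hindep : IndepFun (fun ω (m : Fin (j + 1)) => S m ω) (fun ω => S n ω - S j ω) μ)
    (hmedian : 1 ≤ 2 * μ {ω | 0 ≤ S n ω - S j ω}) :
    μ (firstCrossing S x j) ≤ 2 * μ (firstCrossing S x j ∩ {ω | x ≤ S n ω}) := by
  have hprod : μ (firstCrossing S x j ∩ {ω | 0 ≤ S n ω - S j ω}) =
      μ (firstCrossing S x j) * μ {ω | 0 ≤ S n ω - S j ω} := by
    rw [firstCrossing_eq_preimage]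
    exact hindep.measure_inter_preimage_eq_mul _ (Set.Ici 0) (measurableSet_crossesAtLast x j)
      measurableSet_Ici
  calc μ (firstCrossing S x j) = μ (firstCrossing S x j) * 1 := (mul_one _).symm
    _ ≤ μ (firstCrossing S x j) * (2 * μ {ω | 0 ≤ S n ω - S j ω}) := by gcongr
    _ = 2 * μ (firstCrossing S x j ∩ {ω | 0 ≤ S n ω - S j ω}) := by rw [hprod]; ring
    _ ≤ 2 * μ (firstCrossing S x j ∩ {ω | x ≤ S n ω}) := by
      gcongr 2 * μ ?_
      rintro ω ⟨hcross, hinc : 0 ≤ S n ω - S j ω⟩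
      exact ⟨hcross, show x ≤ S n ω by linarith [hcross.1]⟩

theorem levy_maximal_ineq (hS : ∀ j, Measurable (S j)) (n : ℕ)
    (hindep : ∀ j ≤ n,
      IndepFun (fun ω (m : Fin (j + 1)) => S m ω) (fun ω => S n ω - S j ω) μ)
    (hmedian : ∀ j ≤ n, 1 ≤ 2 * μ {ω | 0 ≤ S n ω - S j ω}) (x : ℝ) :
    μ {ω | ∃ j ≤ n, x ≤ S j ω} ≤ 2 * μ {ω | x ≤ S n ω} := by
  have hdisj : (range (n + 1) : Set ℕ).PairwiseDisjoint
      fun j => firstCrossing S x j ∩ {ω | x ≤ S n ω} :=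
    fun a _ b _ hab => (pairwise_disjoint_firstCrossing hab).mono Set.inter_subset_left
      Set.inter_subset_left
  calc μ {ω | ∃ j ≤ n, x ≤ S j ω} ≤ μ (⋃ j ∈ range (n + 1), firstCrossing S x j) :=
        measure_mono (setOf_exists_le_subset_biUnion_firstCrossing n)
    _ ≤ ∑ j ∈ range (n + 1), μ (firstCrossing S x j) := measure_biUnion_finset_le _ _
    _ ≤ ∑ j ∈ range (n + 1), 2 * μ (firstCrossing S x j ∩ {ω | x ≤ S n ω}) :=
        sum_le_sum fun j hj =>
          have hjn := Nat.lt_succ_iff.mp (mem_range.mp hj)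
          measure_firstCrossing_le (hindep j hjn) (hmedian j hjn)
    _ = 2 * μ (⋃ j ∈ range (n + 1), firstCrossing S x j ∩ {ω | x ≤ S n ω}) := by
        rw [← mul_sum, measure_biUnion_finset hdisj fun j _ =>
          (measurableSet_firstCrossing hS j).inter (measurableSet_le measurable_const (hS n))]
    _ ≤ 2 * μ {ω | x ≤ S n ω} := by
        gcongr
        exact Set.iUnion₂_subset fun j _ => Set.inter_subset_right

end LevyInequality

section AlternatingWalk

variable {Ω : Type*} {mΩ : MeasurableSpace Ω} {μ : Measure Ω} {τ : ℕ → Ω → ℝ}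

lemma indepFun_altSum_odd (hτ : ∀ k, Measurable (τ k)) (hindep : iIndepFun τ μ) {j n : ℕ}
    (hjn : j ≤ n) :
    IndepFun (fun ω (m : Fin (j + 1)) => altSum (τ · ω) (2 * m + 1))
      (fun ω => altSum (τ · ω) (2 * n + 1) - altSum (τ · ω) (2 * j + 1)) μ := by
  simp_rw [altSum_odd_sub_odd _ hjn]
  have hdisj : Disjoint (range (2 * j + 2)) (Icc (2 * j + 2) (2 * n + 1)) := by
    simp only [disjoint_left, mem_range, mem_Icc]
    omega
  refine hindep.indepFun_of_dependsOn hτ hdisj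
    (measurable_pi_lambda _ fun m => measurable_altSum _) (measurable_sumPairIncrements _)
    (fun t t' h => funext fun m => dependsOn_altSum _ fun k hk => h k ?_)
    (dependsOn_sumPairIncrements j n)
  simp only [coe_range, Set.mem_Iio] at hk ⊢
  omega

lemma one_le_two_mul_measure_altSum_odd_sub_nonneg [IsProbabilityMeasure μ]
    (hτ : ∀ k, Measurable (τ k)) (hindep : iIndepFun τ μ)
    (hident : ∀ k, IdentDistrib (τ k) (τ 1) μ μ) {j n : ℕ} (hjn : j ≤ n) :
    1 ≤ 2 * μ {ω | 0 ≤ altSum (τ · ω) (2 * n + 1) - altSum (τ · ω) (2 * j + 1)} := by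
  simp_rw [altSum_odd_sub_odd _ hjn]
  refine IdentDistrib.one_le_two_mul_measure_nonneg ?_
  -- swapping `τ_{2m+2} ↔ τ_{2m+3}` preserves the joint law and negates every increment
  have hswap : IdentDistrib (fun ω => sumPairIncrements (Ico j n) (τ · ω))
      (fun ω => sumPairIncrements (Ico j n) ((τ · ω) ∘ swapPairs)) μ μ :=
    (hindep.identDistrib_precomp hτ swapPairs_injective
      fun k => (hident _).trans (hident k).symm).symm.comp (measurable_sumPairIncrements _)
  simp only [sumPairIncrements_comp_swapPairs] at hswap
  exact hswap

end AlternatingWalk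

end ProbabilityTheory

theorem stmt_7 {Ω : Type*} [MeasureSpace Ω] [IsProbabilityMeasure (ℙ : Measure Ω)]
    (τ : ℕ → Ω → ℝ)
    (hmeas : ∀ k, Measurable (τ k))
    (hindep : iIndepFun τ ℙ)
    (hident : ∀ k, IdentDistrib (τ k) (τ 1) ℙ ℙ)
    (hnonneg : ∀ k ω, 0 ≤ τ k ω) :
    ∀ (i : ℕ) (x : ℝ),
      ℙ {ω | ∃ l ∈ Finset.Icc 1 (2 * i + 1),
          x ≤ ∑ k ∈ Finset.range l, (-1 : ℝ) ^ k * τ (k + 1) ω}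
        ≤ 2 * ℙ {ω | x ≤ ∑ k ∈ Finset.range (2 * i + 1), (-1 : ℝ) ^ k * τ (k + 1) ω} := by
  intro i x
  let S : ℕ → Ω → ℝ := fun j ω => altSum (τ · ω) (2 * j + 1)
  have hmax_odd : {ω | ∃ l ∈ Finset.Icc 1 (2 * i + 1),
      x ≤ ∑ k ∈ Finset.range l, (-1 : ℝ) ^ k * τ (k + 1) ω} ⊆ {ω | ∃ j ≤ i, x ≤ S j ω} := by
    rintro ω ⟨l, hl, hxl⟩
    rw [Finset.mem_Icc] at hl
    obtain ⟨m, rfl | rfl⟩ := Nat.even_or_odd' l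
    · exact ⟨m, by omega, hxl.trans (altSum_two_mul_le (t := (τ · ω)) m (hnonneg _ ω))⟩
    · exact ⟨m, by omega, hxl⟩
  have hS : ∀ j, Measurable (S j) :=
    fun j => (measurable_altSum _).comp (measurable_pi_lambda _ hmeas)
  calc _ ≤ ℙ {ω | ∃ j ≤ i, x ≤ S j ω} := measure_mono hmax_odd
    _ ≤ 2 * ℙ {ω | x ≤ S i ω} :=
      levy_maximal_ineq (S := S) hS i (fun j hj => indepFun_altSum_odd hmeas hindep hj)
        (fun j hj => one_le_two_mul_measure_altSum_odd_sub_nonneg hmeas hindep hident hj) x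
end

section
/- Let (E_n)_{n≥1} be events in a probability space such that there is a constant C > 0 with P(E_n ∩ E_k) ≤ C·P(E_k)·P(E_{n-k-1}) for all n > k ≥ 1 (with the convention that P(E_0) is some fixed finite bound), and suppose Σ_n P(E_n) = ∞. Then the sequence S_n := (Σ_{k=1}^n 1_{E_k}) / (Σ_{k=1}^n P(E_k)) is bounded in L², and consequently P(E_n occurs for infinitely many n) > 0. -/
/-
Write `T n = ∑_{k=1}^n 1_{E k}` and `a n = ∑_{k=1}^n ℙ (E k)`, so that `𝔼 T n = a n`. Expanding
`(T n)²`, splitting the double sum at the diagonal and bounding the off-diagonal part with the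
correlation hypothesis turns it into a convolution, whence
`𝔼 (T n)² ≤ a n + 2 C (ℙ (E 0) + a n) a n`. Divergence of `∑ ℙ (E n)` means `a n → ∞`, so
`𝔼 (T n)² ≤ D (a n)²` for all large `n`, which bounds `T n / a n` in `L²`. The Paley–Zygmund
inequality then gives `ℙ (T n ≥ a n / 2) ≥ 1 / (4 D)` for large `n`; the limsup of these events has
at least that probability, and on it `T n` is unbounded, so infinitely many `E k` occur.
-/

open MeasureTheory ProbabilityTheory Filter Finset

lemma sum_Ico_sum_Ico_eq_of_symm {M : Type*} [AddCommMonoid M] (q : ℕ → ℕ → M)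
    (hsym : ∀ j k, q j k = q k j) (m n : ℕ) :
    ∑ j ∈ Ico m n, ∑ k ∈ Ico m n, q j k
      = ∑ j ∈ Ico m n, q j j + 2 • ∑ j ∈ Ico m n, ∑ k ∈ Ico m j, q j k := by
  have hsplit : ∀ j ∈ Ico m n, ∑ k ∈ Ico m n, q j k
      = ∑ k ∈ Ico m j, q j k + q j j + ∑ k ∈ Ico (j + 1) n, q j k := by
    intro j hj
    rw [mem_Ico] at hj
    rw [← sum_Ico_consecutive _ hj.1 hj.2.le, sum_eq_sum_Ico_succ_bot hj.2, add_assoc]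
  have hupper : ∑ j ∈ Ico m n, ∑ k ∈ Ico (j + 1) n, q j k
      = ∑ j ∈ Ico m n, ∑ k ∈ Ico m j, q j k := by
    rw [← sum_Ico_Ico_comm' m n fun k j => q j k]
    exact sum_congr rfl fun j _ => sum_congr rfl fun k _ => hsym j k
  rw [sum_congr rfl hsplit, sum_add_distrib, sum_add_distrib, hupper, two_nsmul]
  abel

lemma sum_Icc_sum_Ico_mul_le (p : ℕ → ℝ) (hp : ∀ k, 0 ≤ p k) (n : ℕ) :
    ∑ j ∈ Icc 1 n, ∑ k ∈ Ico 1 j, p k * p (j - k - 1)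
      ≤ (∑ k ∈ Icc 1 n, p k) * (p 0 + ∑ k ∈ Icc 1 n, p k) := by
  have hinner : ∀ k, ∑ j ∈ Ico (k + 1) (n + 1), p (j - k - 1) ≤ p 0 + ∑ k ∈ Icc 1 n, p k := by
    intro k
    calc ∑ j ∈ Ico (k + 1) (n + 1), p (j - k - 1)
        = ∑ i ∈ range (n + 1 - (k + 1)), p i := by
          rw [sum_Ico_eq_sum_range]
          exact sum_congr rfl fun i _ => by congr 1; omega
      _ ≤ ∑ i ∈ range (n + 1), p i :=
          sum_le_sum_of_subset_of_nonneg (range_subset_range.2 (by omega)) fun i _ _ => hp i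
      _ = p 0 + ∑ k ∈ Icc 1 n, p k := by
          rw [range_eq_Ico, sum_eq_sum_Ico_succ_bot n.succ_pos, zero_add, Nat.succ_eq_add_one,
            Ico_add_one_right_eq_Icc]
  calc ∑ j ∈ Icc 1 n, ∑ k ∈ Ico 1 j, p k * p (j - k - 1)
      = ∑ k ∈ Icc 1 n, p k * ∑ j ∈ Ico (k + 1) (n + 1), p (j - k - 1) := by
        rw [← Ico_add_one_right_eq_Icc, ← sum_Ico_Ico_comm']
        simp_rw [mul_sum]
    _ ≤ ∑ k ∈ Icc 1 n, p k * (p 0 + ∑ k ∈ Icc 1 n, p k) :=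
        sum_le_sum fun k _ => mul_le_mul_of_nonneg_left (hinner k) (hp k)
    _ = (∑ k ∈ Icc 1 n, p k) * (p 0 + ∑ k ∈ Icc 1 n, p k) := (sum_mul ..).symm

lemma sum_Icc_sum_Icc_le_of_le_mul (p : ℕ → ℝ) (q : ℕ → ℕ → ℝ) {C : ℝ} (hC : 0 ≤ C)
    (hp : ∀ k, 0 ≤ p k) (hdiag : ∀ j, q j j ≤ p j) (hsym : ∀ j k, q j k = q k j)
    (hq : ∀ j k, 1 ≤ k → k < j → q j k ≤ C * p k * p (j - k - 1)) (n : ℕ) :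
    ∑ j ∈ Icc 1 n, ∑ k ∈ Icc 1 n, q j k
      ≤ ∑ k ∈ Icc 1 n, p k + 2 * C * (p 0 + ∑ k ∈ Icc 1 n, p k) * ∑ k ∈ Icc 1 n, p k := by
  have hoff : ∑ j ∈ Icc 1 n, ∑ k ∈ Ico 1 j, q j k
      ≤ C * (p 0 + ∑ k ∈ Icc 1 n, p k) * ∑ k ∈ Icc 1 n, p k := calc
    _ ≤ ∑ j ∈ Icc 1 n, ∑ k ∈ Ico 1 j, C * (p k * p (j - k - 1)) :=
        sum_le_sum fun j _ => sum_le_sum fun k hk => by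
          rw [← mul_assoc]; exact hq j k (mem_Ico.1 hk).1 (mem_Ico.1 hk).2
    _ = C * ∑ j ∈ Icc 1 n, ∑ k ∈ Ico 1 j, p k * p (j - k - 1) := by simp_rw [mul_sum]
    _ ≤ C * (p 0 + ∑ k ∈ Icc 1 n, p k) * ∑ k ∈ Icc 1 n, p k := by
        rw [mul_assoc, mul_comm (p 0 + _)]
        exact mul_le_mul_of_nonneg_left (sum_Icc_sum_Ico_mul_le p hp n) hC
  rw [← Ico_add_one_right_eq_Icc, sum_Ico_sum_Ico_eq_of_symm q hsym, Ico_add_one_right_eq_Icc,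
    nsmul_eq_mul, Nat.cast_ofNat]
  linarith [sum_le_sum fun j (_ : j ∈ Icc 1 n) => hdiag j]

section PaleyZygmund

variable {Ω : Type*} [MeasurableSpace Ω] {μ : Measure Ω}

-- `x - x² / L ≤ L / 4` is AM–GM, and below the threshold `t` simply `x - x² / L ≤ x < t`.
lemma sub_sq_div_le_add_ite {t L : ℝ} (ht : 0 ≤ t) (hL : 0 < L) (x : ℝ) :
    x - x ^ 2 / L ≤ t + if t ≤ x then L / 4 else 0 := by
  have hsq : 0 ≤ x ^ 2 / L := by positivity
  split_ifs with hx
  · have : x - x ^ 2 / L = L / 4 - (x - L / 2) ^ 2 / L := by field_simp; ring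
    have : 0 ≤ (x - L / 2) ^ 2 / L := by positivity
    linarith
  · linarith [not_le.1 hx]

lemma integral_sub_integral_sq_div_le [IsProbabilityMeasure μ] {X : Ω → ℝ} (hXm : Measurable X)
    (hX : Integrable X μ) (hX2 : Integrable (fun ω => X ω ^ 2) μ) {t L : ℝ} (ht : 0 ≤ t)
    (hL : 0 < L) :
    ∫ ω, X ω ∂μ - (∫ ω, X ω ^ 2 ∂μ) / L ≤ t + L / 4 * μ.real {ω | t ≤ X ω} := by
  have hmeas : MeasurableSet {ω | t ≤ X ω} := measurableSet_le measurable_const hXm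
  have hind : Integrable ({ω | t ≤ X ω}.indicator fun _ => L / 4) μ :=
    (integrable_const _).indicator hmeas
  have hpt : ∀ ω, X ω - X ω ^ 2 / L ≤ t + {ω | t ≤ X ω}.indicator (fun _ => L / 4) ω := by
    intro ω
    simpa [Set.indicator_apply] using sub_sq_div_le_add_ite ht hL (X ω)
  have := integral_mono (f := fun ω => X ω - X ω ^ 2 / L)
    (g := fun ω => t + {ω | t ≤ X ω}.indicator (fun _ => L / 4) ω) (hX.sub (hX2.div_const L))
    ((integrable_const t).add hind) hpt
  rwa [integral_sub hX (hX2.div_const L), integral_div, integral_add (integrable_const t) hind,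
    integral_const, integral_indicator_const _ hmeas, probReal_univ, one_smul, smul_eq_mul,
    mul_comm] at this

theorem paley_zygmund [IsProbabilityMeasure μ] {X : Ω → ℝ} (hXm : Measurable X)
    (hX : Integrable X μ) (hX2 : Integrable (fun ω => X ω ^ 2) μ) {θ B : ℝ} (hθ0 : 0 ≤ θ)
    (hθ1 : θ < 1) (hpos : 0 < ∫ ω, X ω ∂μ) (hB : ∫ ω, X ω ^ 2 ∂μ ≤ B) :
    (1 - θ) ^ 2 * (∫ ω, X ω ∂μ) ^ 2 / B ≤ μ.real {ω | θ * ∫ ω, X ω ∂μ ≤ X ω} := by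
  set a := ∫ ω, X ω ∂μ
  rcases le_or_gt B 0 with hB0 | hB0
  · exact (div_nonpos_of_nonneg_of_nonpos (by positivity) hB0).trans measureReal_nonneg
  set c := (1 - θ) * a
  have hc : 0 < c := mul_pos (by linarith) hpos
  -- `L = 2B / c` optimises the bound of the previous lemma
  have key := integral_sub_integral_sq_div_le hXm hX hX2 (t := θ * a) (L := 2 * B / c)
    (by positivity) (by positivity)
  have hBL : (∫ ω, X ω ^ 2 ∂μ) / (2 * B / c) ≤ c / 2 := by
    rw [div_le_iff₀ (by positivity)]
    field_simp
    linarith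
  have hhalf : c / 2 ≤ B * μ.real {ω | θ * a ≤ X ω} / (2 * c) := by
    have : 2 * B / c / 4 * μ.real {ω | θ * a ≤ X ω}
        = B * μ.real {ω | θ * a ≤ X ω} / (2 * c) := by
      field_simp; ring
    linarith
  rw [le_div_iff₀ (by positivity)] at hhalf
  rw [div_le_iff₀ hB0]
  linarith

end PaleyZygmund

lemma le_measure_limsup_atTop {α : Type*} [MeasurableSpace α] {μ : Measure α}
    [IsFiniteMeasure μ] {s : ℕ → Set α} (hs : ∀ n, MeasurableSet (s n)) {δ : ENNReal}
    (hδ : ∀ᶠ n in atTop, δ ≤ μ (s n)) : δ ≤ μ (limsup s atTop) := by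
  have hanti : Antitone fun N => ⋃ n ≥ N, s n := fun N M hNM =>
    Set.biUnion_subset_biUnion_left fun n hn => hNM.trans hn
  rw [limsup_eq_iInf_iSup_of_nat, Set.iInf_eq_iInter]
  simp_rw [Set.iSup_eq_iUnion]
  rw [hanti.measure_iInter (fun N => (MeasurableSet.biUnion (Set.to_countable _)
    fun n _ => hs n).nullMeasurableSet) ⟨0, measure_ne_top _ _⟩]
  refine le_iInf fun N => ?_
  obtain ⟨n, hn, hNn⟩ := (hδ.and (eventually_ge_atTop N)).exists
  exact hn.trans (measure_mono (Set.subset_biUnion_of_mem (u := s) hNn))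

noncomputable def hitCount {Ω : Type*} (E : ℕ → Set Ω) (n : ℕ) (ω : Ω) : ℝ :=
  ∑ k ∈ Icc 1 n, (E k).indicator (fun _ => (1 : ℝ)) ω

noncomputable def probSum {Ω : Type*} [MeasurableSpace Ω] (μ : Measure Ω) (E : ℕ → Set Ω)
    (n : ℕ) : ℝ :=
  ∑ k ∈ Icc 1 n, μ.real (E k)

section HitCount

variable {Ω : Type*} {E : ℕ → Set Ω}

lemma hitCount_eq_card (n : ℕ) (ω : Ω) [DecidablePred (ω ∈ E ·)] :
    hitCount E n ω = #{k ∈ Icc 1 n | ω ∈ E k} := by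
  rw [hitCount, sum_indicator_eq_sum_filter, sum_const, nsmul_one]

lemma hitCount_sq (n : ℕ) (ω : Ω) :
    hitCount E n ω ^ 2
      = ∑ j ∈ Icc 1 n, ∑ k ∈ Icc 1 n, (E j ∩ E k).indicator (fun _ => (1 : ℝ)) ω := by
  rw [hitCount, sq, sum_mul_sum]
  simp_rw [← Set.inter_indicator_mul, one_mul]

lemma limsup_setOf_le_hitCount_subset {b : ℕ → ℝ} (hb : Tendsto b atTop atTop) :
    limsup (fun n => {ω | b n ≤ hitCount E n ω}) atTop ⊆ limsup E atTop := by
  classical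
  intro ω hω
  rw [mem_limsup_iff_frequently_mem] at hω ⊢
  by_contra hfin
  obtain ⟨K, hK⟩ := eventually_atTop.1 (not_frequently.1 hfin)
  have hbound : ∀ n, hitCount E n ω ≤ K := fun n => by
    rw [hitCount_eq_card]
    exact_mod_cast (card_le_card fun k hk => mem_range.2 (not_le.1 fun hKk =>
      hK k hKk (mem_filter.1 hk).2)).trans (card_range K).le
  obtain ⟨n, hn, hbn⟩ := (hω.and_eventually (hb.eventually_gt_atTop K)).exists
  exact (hbn.trans_le hn).not_ge (hbound n)

variable [MeasurableSpace Ω] {μ : Measure Ω}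

lemma measurable_hitCount (hE : ∀ k, MeasurableSet (E k)) (n : ℕ) : Measurable (hitCount E n) :=
  Finset.measurable_sum _ fun k _ => measurable_const.indicator (hE k)

variable [IsFiniteMeasure μ]

lemma integrable_hitCount (hE : ∀ k, MeasurableSet (E k)) (n : ℕ) :
    Integrable (hitCount E n) μ :=
  integrable_finsetSum _ fun k _ => (integrable_const _).indicator (hE k)

lemma integrable_hitCount_sq (hE : ∀ k, MeasurableSet (E k)) (n : ℕ) :
    Integrable (fun ω => hitCount E n ω ^ 2) μ := by
  simp_rw [hitCount_sq]
  exact integrable_finsetSum _ fun j _ => integrable_finsetSum _ fun k _ =>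
    (integrable_const _).indicator ((hE j).inter (hE k))

lemma integral_hitCount (hE : ∀ k, MeasurableSet (E k)) (n : ℕ) :
    ∫ ω, hitCount E n ω ∂μ = probSum μ E n := by
  unfold hitCount
  rw [integral_finsetSum _ fun k _ => (integrable_const _).indicator (hE k)]
  simp_rw [integral_indicator_const _ (hE _), smul_eq_mul, mul_one]
  rfl

lemma integral_hitCount_sq (hE : ∀ k, MeasurableSet (E k)) (n : ℕ) :
    ∫ ω, hitCount E n ω ^ 2 ∂μ = ∑ j ∈ Icc 1 n, ∑ k ∈ Icc 1 n, μ.real (E j ∩ E k) := by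
  simp_rw [hitCount_sq]
  rw [integral_finsetSum _ fun j _ => integrable_finsetSum _ fun k _ =>
    (integrable_const _).indicator ((hE j).inter (hE k))]
  refine sum_congr rfl fun j _ => ?_
  rw [integral_finsetSum _ fun k _ => (integrable_const _).indicator ((hE j).inter (hE k))]
  simp_rw [integral_indicator_const _ ((hE j).inter (hE _)), smul_eq_mul, mul_one]

lemma tendsto_probSum_atTop (hdiv : ∑' n, μ (E n) = ⊤) :
    Tendsto (probSum μ E) atTop atTop := by
  have hnot : ¬Summable fun n => μ.real (E n) := fun hsum => by
    have := ENNReal.ofReal_tsum_of_nonneg (fun n => measureReal_nonneg) hsum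
    simp only [measureReal_def, ENNReal.ofReal_toReal (measure_ne_top μ _)] at this
    exact ENNReal.ofReal_ne_top (this.trans hdiv)
  have h := ((not_summable_iff_tendsto_nat_atTop_of_nonneg fun n => measureReal_nonneg).1
    hnot).comp (tendsto_add_atTop_nat 1)
  refine (tendsto_atTop_add_const_right _ (-μ.real (E 0)) h).congr fun n => ?_
  rw [Function.comp_apply, sum_range_succ', add_neg_cancel_right, probSum,
    ← Ico_add_one_right_eq_Icc, sum_Ico_eq_sum_range, add_tsub_cancel_right]
  simp_rw [add_comm 1]

lemma integral_hitCount_sq_le (hE : ∀ k, MeasurableSet (E k)) {C : ℝ} (hC : 0 ≤ C)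
    (hcorr : ∀ n k, 1 ≤ k → k < n →
      μ.real (E n ∩ E k) ≤ C * μ.real (E k) * μ.real (E (n - k - 1)))
    (n : ℕ) :
    ∫ ω, hitCount E n ω ^ 2 ∂μ
      ≤ probSum μ E n + 2 * C * (μ.real (E 0) + probSum μ E n) * probSum μ E n := by
  rw [integral_hitCount_sq hE]
  exact sum_Icc_sum_Icc_le_of_le_mul (fun k => μ.real (E k)) (fun j k => μ.real (E j ∩ E k)) hC
    (fun k => measureReal_nonneg) (fun j => by rw [Set.inter_self])
    (fun j k => by rw [Set.inter_comm]) hcorr n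

lemma integral_hitCount_sq_le_mul_sq (hE : ∀ k, MeasurableSet (E k)) {C : ℝ} (hC : 0 ≤ C)
    (hcorr : ∀ n k, 1 ≤ k → k < n →
      μ.real (E n ∩ E k) ≤ C * μ.real (E k) * μ.real (E (n - k - 1)))
    {n : ℕ} (hn : 1 ≤ probSum μ E n) :
    ∫ ω, hitCount E n ω ^ 2 ∂μ ≤ (1 + 2 * C * (μ.real (E 0) + 1)) * probSum μ E n ^ 2 := by
  have h0 : 0 ≤ μ.real (E 0) := measureReal_nonneg
  have hC' : 0 ≤ 2 * C * (μ.real (E 0) + 1) := by positivity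
  refine (integral_hitCount_sq_le hE hC hcorr n).trans ?_
  nlinarith [mul_le_mul_of_nonneg_left hn hC', mul_le_mul_of_nonneg_left hn h0]

end HitCount

theorem stmt_13 {Ω : Type*} [MeasureSpace Ω] [IsProbabilityMeasure (ℙ : Measure Ω)]
    (E : ℕ → Set Ω) (hmeas : ∀ n, MeasurableSet (E n))
    (C : ℝ) (hC : 0 < C)
    (hcorr : ∀ n k : ℕ, 1 ≤ k → k < n →
      (ℙ (E n ∩ E k)).toReal ≤ C * (ℙ (E k)).toReal * (ℙ (E (n - k - 1))).toReal)
    (hdiv : ∑' n : ℕ, ℙ (E n) = ⊤) :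
    (∃ M : ℝ, ∀ n : ℕ, 1 ≤ n →
        (∫ ω, ((∑ k ∈ Finset.Icc 1 n, Set.indicator (E k) (fun _ => (1 : ℝ)) ω)
            / (∑ k ∈ Finset.Icc 1 n, (ℙ (E k)).toReal)) ^ 2 ∂ℙ) ≤ M) ∧
      0 < ℙ (Filter.limsup E Filter.atTop) := by
  set D := 1 + 2 * C * ((ℙ : Measure Ω).real (E 0) + 1)
  have hD : 0 < D := by positivity
  have ha := tendsto_probSum_atTop hdiv
  have hmom : ∀ᶠ n in atTop, 0 < probSum ℙ E n ∧
      ∫ ω, hitCount E n ω ^ 2 ∂ℙ ≤ D * probSum ℙ E n ^ 2 :=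
    (ha.eventually_ge_atTop 1).mono fun n hn =>
      ⟨by linarith, integral_hitCount_sq_le_mul_sq hmeas hC.le hcorr hn⟩
  constructor
  · have hS : ∀ᶠ n in atTop, ∫ ω, (hitCount E n ω / probSum ℙ E n) ^ 2 ∂ℙ ≤ D :=
      hmom.mono fun n ⟨hpos, hn⟩ => by
        simp_rw [div_pow]
        rw [integral_div, div_le_iff₀ (by positivity)]
        exact hn
    obtain ⟨M, hM⟩ := IsBoundedUnder.bddAbove_range (f := fun n =>
      ∫ ω, (hitCount E n ω / probSum ℙ E n) ^ 2 ∂ℙ) ⟨D, hS⟩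
    exact ⟨M, fun n _ => hM ⟨n, rfl⟩⟩
  · have hPZ : ∀ᶠ n in atTop,
        ENNReal.ofReal (1 / (4 * D)) ≤ ℙ {ω | 1 / 2 * probSum ℙ E n ≤ hitCount E n ω} :=
      hmom.mono fun n ⟨hpos, hn⟩ => by
        have := paley_zygmund (measurable_hitCount hmeas n) (integrable_hitCount hmeas n)
          (integrable_hitCount_sq hmeas n) (θ := 1 / 2) (B := D * probSum ℙ E n ^ 2)
          (by norm_num) (by norm_num) (by rwa [integral_hitCount hmeas]) hn
        rw [integral_hitCount hmeas] at this
        refine ENNReal.ofReal_le_of_le_toReal (le_of_eq_of_le ?_ this)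
        field_simp
        ring
    calc 0 < ENNReal.ofReal (1 / (4 * D)) := ENNReal.ofReal_pos.2 (by positivity)
      _ ≤ ℙ (limsup (fun n => {ω | 1 / 2 * probSum ℙ E n ≤ hitCount E n ω}) atTop) :=
        le_measure_limsup_atTop (fun n => measurableSet_le measurable_const
          (measurable_hitCount hmeas n)) hPZ
      _ ≤ ℙ (limsup E atTop) :=
        measure_mono (limsup_setOf_le_hitCount_subset (ha.const_mul_atTop (by norm_num)))
end

section
/- Let (M_n) be a symmetric random walk whose jump characteristic function φ is nonnegative on [-p, p]. Then there exist universal constants 0 < m ≤ M such that for any λ > 2π/p and n ≥ 1: m·λ·∫_{-π/λ}^{π/λ} φ(t)ⁿ dt ≤ Q(M_n, λ) ≤ M·λ·∫_{-π/λ}^{π/λ} φ(t)ⁿ dt, where Q is the Lévy concentration function. -/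
/-!
Esseen's smoothing argument with the Fejér pair. The tent `tent a t = (1 - |t|/a)₊` has cosine
transform `a · sinc (a z / 2)²`, so Fubini turns `∫ tent a t · cos (t c) · φ(t)ⁿ dt` into
`a · ∫ sinc (a (y - c) / 2)² dμ(y)`, where `μ` is the law of `M_n`, whose characteristic function
`φⁿ` is real by symmetry. Upper bound: with `a = 1/λ` and `c` the midpoint of an interval of
length `λ`, the kernel is `≥ 1/2` on that interval, while `tent · cos ≤ 1` against `φⁿ ≥ 0`.
Lower bound: with `a = 2π/λ` and `c = 0`, the tent is `≥ 1/2` on `[-π/λ, π/λ]`, and the kernel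
`sinc (π y / λ)²` is at most `6 / (1 + j²)` on the `j`-th interval of length `λ`, so its integral
is at most a summable multiple of `Q(M_n, λ)`.
-/

open MeasureTheory ProbabilityTheory Set Real

lemma sinc_sq_le_one (x : ℝ) : sinc x ^ 2 ≤ 1 := by
  simpa using pow_le_one₀ (abs_nonneg _) (abs_sinc_le_one x) (n := 2)

lemma sinc_sq_le_two_div (x : ℝ) : sinc x ^ 2 ≤ 2 / (1 + x ^ 2) := by
  rw [le_div_iff₀ (by positivity)]
  rcases le_or_gt (x ^ 2) 1 with hx | hx
  · nlinarith [sinc_sq_le_one x, sq_nonneg (sinc x)]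
  · have hx0 : x ≠ 0 := by rintro rfl; norm_num at hx
    have hsin : (sinc x * x) ^ 2 ≤ 1 := by
      rw [sinc_of_ne_zero hx0, div_mul_cancel₀ _ hx0]; exact sin_sq_le_one x
    nlinarith [sinc_sq_le_one x]

lemma one_half_le_sinc_sq {x : ℝ} (hx : |x| ≤ 1 / 4) : 1 / 2 ≤ sinc x ^ 2 := by
  wlog hx0 : 0 < x generalizing x
  · rcases (not_lt.1 hx0).eq_or_lt with rfl | hneg
    · norm_num [sinc_zero]
    · rw [← sinc_neg]; exact this (by rwa [abs_neg]) (by linarith)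
  rw [abs_of_pos hx0] at hx
  have hsin := sin_gt_sub_cube hx0
  have hsinc : 1 - x ^ 2 / 6 ≤ sinc x := by
    rw [sinc_of_ne_zero hx0.ne', le_div_iff₀ hx0]; nlinarith
  have : 3 / 4 ≤ sinc x := by nlinarith
  nlinarith

noncomputable def tent (a t : ℝ) : ℝ := max (1 - |t| / a) 0

lemma tent_nonneg (a t : ℝ) : 0 ≤ tent a t := le_max_right _ _

lemma tent_le_one {a : ℝ} (ha : 0 ≤ a) (t : ℝ) : tent a t ≤ 1 :=
  max_le (by linarith [div_nonneg (abs_nonneg t) ha]) zero_le_one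

lemma one_half_le_tent {a t : ℝ} (ha : 0 < a) (ht : |t| ≤ a / 2) : 1 / 2 ≤ tent a t := by
  refine le_max_of_le_left ?_
  have : |t| / a ≤ 1 / 2 := by rw [div_le_iff₀ ha]; linarith
  linarith

@[fun_prop]
lemma continuous_tent (a : ℝ) : Continuous (tent a) := by
  unfold tent; fun_prop

lemma tent_neg (a t : ℝ) : tent a (-t) = tent a t := by
  simp only [tent, abs_neg]

lemma tent_of_mem_Icc {a t : ℝ} (ha : 0 < a) (ht : t ∈ Icc 0 a) : tent a t = 1 - t / a := by
  rw [tent, abs_of_nonneg ht.1, max_eq_left (sub_nonneg.2 ((div_le_one ha).2 ht.2))]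

lemma integral_tent_mul_cos_of_ne_zero {a z : ℝ} (ha : 0 < a) (hz : z ≠ 0) :
    ∫ t in -a..a, tent a t * cos (t * z) = a * sinc (a * z / 2) ^ 2 := by
  set f := fun t => tent a t * cos (t * z)
  have hf : Continuous f := by fun_prop
  have heven : ∫ t in -a..0, f t = ∫ t in 0..a, f t := by
    rw [← neg_zero, ← intervalIntegral.integral_comp_neg, neg_zero]
    simp only [f, tent_neg, neg_mul, cos_neg]
  have hderiv : ∀ t ∈ uIcc 0 a, HasDerivAt
      (fun t => (1 - t / a) * sin (t * z) / z - cos (t * z) / (a * z ^ 2)) (f t) t := by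
    intro t ht
    rw [uIcc_of_le ha.le] at ht
    have := (((((hasDerivAt_id t).div_const a).const_sub 1).mul
      (hasDerivAt_mul_const z).sin).div_const z).sub
      ((hasDerivAt_mul_const z).cos.div_const (a * z ^ 2))
    refine this.congr_deriv ?_
    simp only [f, id, tent_of_mem_Icc ha ht]
    field_simp
    ring
  rw [← intervalIntegral.integral_add_adjacent_intervals (hf.intervalIntegrable _ 0)
    (hf.intervalIntegrable 0 _), heven, intervalIntegral.integral_eq_sub_of_hasDerivAt hderiv
    (hf.intervalIntegrable _ _), sinc_of_ne_zero (by positivity)]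
  have hcos : cos (a * z) = 1 - 2 * sin (a * z / 2) ^ 2 := by
    have h := cos_two_mul (a * z / 2)
    rw [show 2 * (a * z / 2) = a * z by ring] at h
    linarith [cos_sq_add_sin_sq (a * z / 2)]
  simp only [zero_div, sub_zero, zero_mul, sin_zero, mul_zero, cos_zero, div_self ha.ne', hcos]
  field_simp
  ring

lemma integral_tent_mul_cos {a : ℝ} (ha : 0 < a) (z : ℝ) :
    ∫ t in -a..a, tent a t * cos (t * z) = a * sinc (a * z / 2) ^ 2 := by
  -- both sides are continuous in `z`, so the case `z = 0` follows from `z ≠ 0`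
  refine congrFun (Continuous.ext_on (dense_compl_singleton 0) ?_ (by fun_prop)
    fun z hz => integral_tent_mul_cos_of_ne_zero ha hz) z
  exact intervalIntegral.continuous_parametric_intervalIntegral_of_continuous
    (f := fun z t => tent a t * cos (t * z)) (by fun_prop) continuous_const

section CharFun

variable {μ : Measure ℝ} [IsFiniteMeasure μ]

lemma re_charFun (t : ℝ) : (charFun μ t).re = ∫ x, cos (t * x) ∂μ := by
  rw [charFun_apply_real, ← RCLike.re_eq_complex_re, ← integral_re
    (Integrable.of_bound (by fun_prop) 1 (ae_of_all _ fun x => by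
      norm_cast; rw [Complex.norm_exp_ofReal_mul_I]))]
  simp_rw [RCLike.re_eq_complex_re, ← Complex.ofReal_mul, Complex.exp_ofReal_mul_I_re]

lemma im_charFun (t : ℝ) : (charFun μ t).im = ∫ x, sin (t * x) ∂μ := by
  rw [charFun_apply_real, ← RCLike.im_eq_complex_im, ← integral_im
    (Integrable.of_bound (by fun_prop) 1 (ae_of_all _ fun x => by
      norm_cast; rw [Complex.norm_exp_ofReal_mul_I]))]
  simp_rw [RCLike.im_eq_complex_im, ← Complex.ofReal_mul, Complex.exp_ofReal_mul_I_im]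

lemma integral_cos_mul_sub (hμ : ∀ t, (charFun μ t).im = 0) (t c : ℝ) :
    ∫ y, cos (t * (y - c)) ∂μ = cos (t * c) * (charFun μ t).re := by
  have hint (f : ℝ → ℝ) (hf : Continuous f) (hb : ∀ x, |f x| ≤ 1) : Integrable f μ :=
    Integrable.of_bound hf.aestronglyMeasurable 1 (ae_of_all _ hb)
  simp_rw [mul_sub, cos_sub]
  rw [integral_add ((hint _ (by fun_prop) fun _ => abs_cos_le_one _).mul_const _)
      ((hint _ (by fun_prop) fun _ => abs_sin_le_one _).mul_const _),
    integral_mul_const, integral_mul_const, ← re_charFun, ← im_charFun, hμ]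
  ring

lemma charFun_eq_ofReal_of_map_neg (hμ : μ.map Neg.neg = μ) (t : ℝ) :
    charFun μ t = ((∫ x, cos (t * x) ∂μ : ℝ) : ℂ) := by
  have hconj := charFun_map_mul (μ := μ) (-1) t
  rw [show (fun x : ℝ => -1 * x) = Neg.neg by ext; simp, hμ, neg_one_mul, charFun_neg] at hconj
  rw [← re_charFun, Complex.conj_eq_iff_re.mp hconj.symm]

lemma integral_tent_mul_integral_cos {a : ℝ} (ha : 0 < a) (c : ℝ) :
    ∫ t in -a..a, tent a t * ∫ y, cos (t * (y - c)) ∂μ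
      = a * ∫ y, sinc (a * (y - c) / 2) ^ 2 ∂μ := by
  have hint : Integrable (Function.uncurry fun t y => tent a t * cos (t * (y - c)))
      ((volume.restrict (uIoc (-a) a)).prod μ) := by
    rw [uIoc_of_le (by linarith)]
    refine Integrable.of_bound (by fun_prop) 1 (ae_of_all _ fun q => ?_)
    rw [Function.uncurry_apply_pair, norm_mul, norm_of_nonneg (tent_nonneg _ _)]
    exact mul_le_one₀ (tent_le_one ha.le _) (norm_nonneg _) (abs_cos_le_one _)
  simp_rw [← integral_const_mul]
  rw [intervalIntegral_integral_swap hint]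
  simp_rw [integral_tent_mul_cos ha]

end CharFun

noncomputable def levyConcentration (μ : Measure ℝ) (lam : ℝ) : ℝ :=
  ⨆ x, μ.real (Icc x (x + lam))

section Concentration

variable {μ : Measure ℝ} [IsFiniteMeasure μ] {lam : ℝ}

lemma measureReal_Icc_le_levyConcentration (x : ℝ) :
    μ.real (Icc x (x + lam)) ≤ levyConcentration μ lam :=
  le_ciSup (f := fun x => μ.real (Icc x (x + lam)))
    ⟨μ.real univ, by rintro - ⟨y, rfl⟩; exact measureReal_mono (subset_univ _)⟩ x

lemma integral_le_tsum_mul_levyConcentration {f : ℝ → ℝ} {b : ℤ → ℝ} (hlam : 0 < lam)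
    (hf : Integrable f μ) (hf0 : ∀ y, 0 ≤ f y) (hb : Summable b)
    (hfb : ∀ (j : ℤ), ∀ y ∈ Ioc (j * lam) ((j + 1) * lam), f y ≤ b j) :
    ∫ y, f y ∂μ ≤ (∑' j, b j) * levyConcentration μ lam := by
  set s : ℤ → Set ℝ := fun j => Ioc (j • lam) ((j + 1) • lam)
  have hs (j : ℤ) : s j = Ioc (j * lam) ((j + 1) * lam) := by
    simp only [s, zsmul_eq_mul, Int.cast_add, Int.cast_one]
  have hpiece (j : ℤ) : ∫ y in s j, f y ∂μ ≤ b j * levyConcentration μ lam := by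
    have hfb' : ∀ y ∈ s j, f y ≤ b j := by rw [hs]; exact hfb j
    have hb0 : 0 ≤ b j :=
      (hf0 _).trans (hfb' ((j + 1) * lam) (by rw [hs]; constructor <;> linarith))
    calc ∫ y in s j, f y ∂μ ≤ ∫ _ in s j, b j ∂μ :=
          setIntegral_mono_on hf.integrableOn (integrableOn_const (by simp)) measurableSet_Ioc hfb'
      _ = μ.real (s j) * b j := by rw [setIntegral_const, smul_eq_mul]
      _ ≤ levyConcentration μ lam * b j := by
          refine mul_le_mul_of_nonneg_right ?_ hb0
          refine (measureReal_mono ?_).trans (measureReal_Icc_le_levyConcentration (j * lam))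
          rw [hs]; exact Ioc_subset_Icc_self.trans (Icc_subset_Icc le_rfl (by linarith))
      _ = b j * levyConcentration μ lam := mul_comm _ _
  have hsum : Summable fun j => b j * levyConcentration μ lam := hb.mul_right _
  calc ∫ y, f y ∂μ = ∑' j, ∫ y in s j, f y ∂μ := by
        rw [← setIntegral_univ, ← iUnion_Ioc_zsmul hlam]
        exact integral_iUnion (fun _ => measurableSet_Ioc) (pairwise_disjoint_Ioc_zsmul lam)
          hf.integrableOn
    _ ≤ ∑' j, b j * levyConcentration μ lam :=
        (hsum.of_nonneg_of_le (fun j => setIntegral_nonneg measurableSet_Ioc fun y _ => hf0 y)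
          hpiece).tsum_le_tsum hpiece hsum
    _ = (∑' j, b j) * levyConcentration μ lam := tsum_mul_right

end Concentration

lemma summable_six_div_one_add_sq : Summable fun j : ℤ => 6 / (1 + (j : ℝ) ^ 2) := by
  refine ((summable_one_div_int_pow.mpr one_lt_two).mul_left 6).of_norm_bounded_eventually ?_
  filter_upwards [Filter.eventually_cofinite_ne 0] with j hj
  have hj2 : (0 : ℝ) < (j : ℝ) ^ 2 := by positivity
  rw [norm_of_nonneg (by positivity), mul_one_div]
  exact div_le_div_of_nonneg_left (by norm_num) hj2 (by linarith)

lemma sinc_sq_le_of_mem_Ioc {lam y : ℝ} {j : ℤ} (hlam : 0 < lam)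
    (hy : y ∈ Ioc (j * lam) ((j + 1) * lam)) :
    sinc (π * y / lam) ^ 2 ≤ 6 / (1 + (j : ℝ) ^ 2) := by
  set s := |y| / lam
  have hs0 : 0 ≤ s := by positivity
  have hj : |(j : ℝ)| ≤ s + 1 := by
    have hys : |y| = s * lam := (div_mul_cancel₀ _ hlam.ne').symm
    have h1 : (j : ℝ) * lam < s * lam := hys ▸ hy.1.trans_le (le_abs_self y)
    have h2 : -s * lam ≤ ((j : ℝ) + 1) * lam := by
      rw [neg_mul, ← hys]; exact (neg_abs_le y).trans hy.2
    rw [abs_le]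
    constructor <;> linarith [lt_of_mul_lt_mul_right h1 hlam.le, le_of_mul_le_mul_right h2 hlam]
  have hπ : s ^ 2 ≤ (π * y / lam) ^ 2 := by
    rw [show (π * y / lam) ^ 2 = π ^ 2 * s ^ 2 by simp only [s, div_pow, sq_abs]; ring]
    nlinarith [mul_nonneg (sq_nonneg s) (by nlinarith [pi_gt_three] : (0 : ℝ) ≤ π ^ 2 - 1)]
  calc sinc (π * y / lam) ^ 2 ≤ 2 / (1 + (π * y / lam) ^ 2) := sinc_sq_le_two_div _
    _ ≤ 2 / (1 + s ^ 2) := by gcongr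
    _ ≤ 6 / (1 + (j : ℝ) ^ 2) := by
        rw [div_le_div_iff₀ (by positivity) (by positivity)]
        nlinarith [sq_abs (j : ℝ), pow_le_pow_left₀ (abs_nonneg _) hj 2]

lemma integral_sinc_sq_le_levyConcentration {μ : Measure ℝ} [IsFiniteMeasure μ] {lam : ℝ}
    (hlam : 0 < lam) : ∫ y, sinc (π * y / lam) ^ 2 ∂μ
      ≤ (∑' j : ℤ, 6 / (1 + (j : ℝ) ^ 2)) * levyConcentration μ lam :=
  integral_le_tsum_mul_levyConcentration hlam
    (Integrable.of_bound (by fun_prop) 1 (ae_of_all _ fun y => by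
      rw [norm_of_nonneg (sq_nonneg _)]; exact sinc_sq_le_one _))
    (fun _ => sq_nonneg _) summable_six_div_one_add_sq fun _ _ hy => sinc_sq_le_of_mem_Ioc hlam hy

noncomputable def esseenConst : ℝ := 4 * π * ∑' j : ℤ, 6 / (1 + (j : ℝ) ^ 2)

lemma one_le_esseenConst : 1 ≤ esseenConst := by
  have h6 : 6 ≤ ∑' j : ℤ, 6 / (1 + (j : ℝ) ^ 2) := by
    simpa using summable_six_div_one_add_sq.le_tsum 0 (fun j _ => by positivity)
  unfold esseenConst
  nlinarith [pi_gt_three]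

section Esseen

variable {μ : Measure ℝ} [IsFiniteMeasure μ] {lam : ℝ}

theorem mul_integral_re_charFun_le_levyConcentration (hμ : ∀ t, (charFun μ t).im = 0)
    (hlam : 0 < lam) (hpos : ∀ t ∈ Icc (-(2 * π / lam)) (2 * π / lam), 0 ≤ (charFun μ t).re) :
    lam * ∫ t in -(π / lam)..π / lam, (charFun μ t).re ≤ esseenConst * levyConcentration μ lam := by
  set H := 2 * π / lam
  set g := fun t => (charFun μ t).re
  have hH : 0 < H := by positivity
  have hg : Continuous g := Complex.continuous_re.comp continuous_charFun
  have hfourier : ∫ t in -H..H, tent H t * g t = H * ∫ y, sinc (π * y / lam) ^ 2 ∂μ := by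
    have := integral_tent_mul_integral_cos (μ := μ) hH 0
    simp_rw [integral_cos_mul_sub hμ, mul_zero, cos_zero, one_mul, sub_zero] at this
    rw [this]
    congr 2 with y
    simp only [H]; ring_nf
  have hhalf : π / lam = H / 2 := by simp only [H]; ring
  have hh0 : 0 < π / lam := by positivity
  calc lam * ∫ t in -(π / lam)..π / lam, g t
      ≤ lam * ∫ t in -(π / lam)..π / lam, 2 * (tent H t * g t) := by
        gcongr
        refine intervalIntegral.integral_mono_on (by linarith) (hg.intervalIntegrable _ _)
          (Continuous.intervalIntegrable (by fun_prop) _ _) fun t ht => ?_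
        have hgt : 0 ≤ g t := hpos t ⟨by linarith [ht.1], by linarith [ht.2]⟩
        have := one_half_le_tent hH (t := t) (abs_le.2 ⟨by linarith [ht.1], by linarith [ht.2]⟩)
        nlinarith
    _ ≤ lam * (2 * ∫ t in -H..H, tent H t * g t) := by
        rw [intervalIntegral.integral_const_mul]
        gcongr
        refine intervalIntegral.integral_mono_interval (by linarith) (by linarith) (by linarith)
          ?_ (Continuous.intervalIntegrable (by fun_prop) _ _)
        filter_upwards [ae_restrict_mem measurableSet_Ioc] with t ht
        exact mul_nonneg (tent_nonneg _ _) (hpos t (Ioc_subset_Icc_self ht))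
    _ = 2 * lam * H * ∫ y, sinc (π * y / lam) ^ 2 ∂μ := by rw [hfourier]; ring
    _ ≤ 2 * lam * H * ((∑' j : ℤ, 6 / (1 + (j : ℝ) ^ 2)) * levyConcentration μ lam) := by
        gcongr; exact integral_sinc_sq_le_levyConcentration hlam
    _ = esseenConst * levyConcentration μ lam := by
        simp only [esseenConst, H]; field_simp; ring

lemma measureReal_Icc_le_integral_sinc_sq (hlam : 0 < lam) (x : ℝ) :
    μ.real (Icc x (x + lam)) ≤ ∫ y, 2 * sinc (lam⁻¹ * (y - (x + lam / 2)) / 2) ^ 2 ∂μ := by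
  rw [← integral_indicator_one measurableSet_Icc]
  refine integral_mono ((integrable_const 1).indicator measurableSet_Icc)
    (Integrable.of_bound (by fun_prop) 2 (ae_of_all _ fun y => ?_)) fun y => ?_
  · rw [norm_of_nonneg (by positivity)]
    linarith [sinc_sq_le_one (lam⁻¹ * (y - (x + lam / 2)) / 2)]
  by_cases hy : y ∈ Icc x (x + lam)
  · rw [indicator_of_mem hy, Pi.one_apply]
    have hclose : |lam⁻¹ * (y - (x + lam / 2)) / 2| ≤ 1 / 4 := by
      have hdist : |y - (x + lam / 2)| ≤ lam / 2 :=
        abs_le.2 ⟨by linarith [hy.1], by linarith [hy.2]⟩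
      rw [abs_div, abs_mul, abs_inv, abs_of_pos hlam, abs_two, div_le_iff₀ two_pos,
        inv_mul_le_iff₀ hlam]
      linarith
    linarith [one_half_le_sinc_sq hclose]
  · rw [indicator_of_notMem hy]; positivity

theorem levyConcentration_le (hμ : ∀ t, (charFun μ t).im = 0) (hlam : 0 < lam)
    (hpos : ∀ t ∈ Icc (-(π / lam)) (π / lam), 0 ≤ (charFun μ t).re) :
    levyConcentration μ lam ≤ 2 * lam * ∫ t in -(π / lam)..π / lam, (charFun μ t).re := by
  set a := lam⁻¹
  set g := fun t => (charFun μ t).re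
  have hg : Continuous g := Complex.continuous_re.comp continuous_charFun
  have ha : 0 < a := inv_pos.2 hlam
  have hah : a ≤ π / lam := by
    rw [div_eq_mul_inv]; exact le_mul_of_one_le_left ha.le (by linarith [pi_gt_three])
  refine ciSup_le fun x => ?_
  set c := x + lam / 2
  have hfourier := integral_tent_mul_integral_cos (μ := μ) ha c
  simp_rw [integral_cos_mul_sub hμ] at hfourier
  calc μ.real (Icc x (x + lam)) ≤ ∫ y, 2 * sinc (a * (y - c) / 2) ^ 2 ∂μ :=
        measureReal_Icc_le_integral_sinc_sq hlam x
    _ = 2 * lam * ∫ t in -a..a, tent a t * (cos (t * c) * g t) := by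
        rw [integral_const_mul, hfourier]; simp only [a]; field_simp
    _ ≤ 2 * lam * ∫ t in -a..a, g t := by
        gcongr
        refine intervalIntegral.integral_mono_on (by linarith)
          (Continuous.intervalIntegrable (by fun_prop) _ _) (hg.intervalIntegrable _ _)
          fun t ht => ?_
        have hgt : 0 ≤ g t := hpos t ⟨by linarith [ht.1], by linarith [ht.2]⟩
        have : tent a t * cos (t * c) ≤ 1 := by
          nlinarith [tent_nonneg a t, tent_le_one ha.le t, neg_one_le_cos (t * c),
            cos_le_one (t * c)]
        nlinarith
    _ ≤ 2 * lam * ∫ t in -(π / lam)..π / lam, g t := by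
        gcongr
        refine intervalIntegral.integral_mono_interval (by linarith) (by linarith) hah ?_
          (hg.intervalIntegrable _ _)
        filter_upwards [ae_restrict_mem measurableSet_Ioc] with t ht
        exact hpos t (Ioc_subset_Icc_self ht)

end Esseen

section RandomWalk

variable {Ω : Type*} [MeasurableSpace Ω] {P : Measure Ω}

lemma charFun_map_sum_range [IsFiniteMeasure P] {X : ℕ → Ω → ℝ}
    (hmeas : ∀ i, Measurable (X i)) (hindep : iIndepFun X P)
    (hident : ∀ i, IdentDistrib (X i) (X 0) P P) (n : ℕ) (t : ℝ) :
    charFun (P.map fun ω => ∑ i ∈ Finset.range n, X i ω) t = charFun (P.map (X 0)) t ^ n := by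
  rw [(hindep.restrict _).charFun_map_fun_finsetSum_eq_prod fun i _ => (hmeas i).aemeasurable]
  simp [Finset.prod_apply, (hident _).map_eq]

lemma charFun_map_eq_ofReal_integral_cos [IsFiniteMeasure P] {Y : Ω → ℝ} (hY : Measurable Y)
    (hsymm : P.map Y = P.map fun ω => -Y ω) (t : ℝ) :
    charFun (P.map Y) t = ((∫ ω, cos (t * Y ω) ∂P : ℝ) : ℂ) := by
  have hneg : (P.map Y).map Neg.neg = P.map Y := by
    rw [Measure.map_map measurable_neg hY]; exact hsymm.symm
  rw [charFun_eq_ofReal_of_map_neg hneg, integral_map hY.aemeasurable (by fun_prop)]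

lemma levyConcentration_map {Y : Ω → ℝ} (hY : Measurable Y) (lam : ℝ) :
    levyConcentration (P.map Y) lam = ⨆ x, (P {ω | x ≤ Y ω ∧ Y ω ≤ x + lam}).toReal := by
  simp_rw [levyConcentration, measureReal_def, Measure.map_apply hY measurableSet_Icc]
  rfl

end RandomWalk

/-- Esseen-type two-sided bound: there are universal constants `0 < m ≤ M` such that
for any symmetric random walk whose jump characteristic function `φ` is nonnegative on
`[-p, p]`, for every `λ > 2π/p` and `n ≥ 1`,
`m·λ·∫_{-π/λ}^{π/λ} φ(t)ⁿ dt ≤ Q(M_n, λ) ≤ M·λ·∫_{-π/λ}^{π/λ} φ(t)ⁿ dt`. -/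
theorem stmt_19 :
    ∃ m M : ℝ, 0 < m ∧ m ≤ M ∧
      ∀ (Ω : Type) (_ : MeasureSpace Ω), IsProbabilityMeasure (ℙ : Measure Ω) →
        ∀ (X : ℕ → Ω → ℝ),
          (∀ i, Measurable (X i)) →
          iIndepFun X ℙ →
          (∀ i, IdentDistrib (X i) (X 0) ℙ ℙ) →
          Measure.map (X 0) ℙ = Measure.map (fun ω => -(X 0 ω)) ℙ →
          ∀ p : ℝ, 0 < p →
            (∀ t ∈ Set.Icc (-p) p, 0 ≤ ∫ ω, Real.cos (t * X 0 ω) ∂ℙ) →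
            ∀ lam : ℝ, 2 * Real.pi / p < lam → ∀ n : ℕ, 1 ≤ n →
              m * lam * (∫ t in (-(Real.pi / lam))..(Real.pi / lam),
                    (∫ ω, Real.cos (t * X 0 ω) ∂ℙ) ^ n)
                  ≤ (⨆ x : ℝ, (ℙ {ω | x ≤ ∑ i ∈ Finset.range n, X i ω ∧
                      ∑ i ∈ Finset.range n, X i ω ≤ x + lam}).toReal) ∧
              (⨆ x : ℝ, (ℙ {ω | x ≤ ∑ i ∈ Finset.range n, X i ω ∧
                  ∑ i ∈ Finset.range n, X i ω ≤ x + lam}).toReal)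
                ≤ M * lam * (∫ t in (-(Real.pi / lam))..(Real.pi / lam),
                    (∫ ω, Real.cos (t * X 0 ω) ∂ℙ) ^ n) := by
  have hC := one_le_esseenConst
  have hC0 : 0 < esseenConst := by linarith
  refine ⟨esseenConst⁻¹, 2, inv_pos.2 hC0, by linarith [inv_le_one_of_one_le₀ hC], ?_⟩
  intro Ω _ _ X hmeas hindep hident hsymm p hp hφ lam hlam n _
  have hlam0 : 0 < lam := (by positivity : 0 < 2 * π / p).trans hlam
  have hS : Measurable fun ω => ∑ i ∈ Finset.range n, X i ω := by fun_prop
  set ν := (ℙ : Measure Ω).map fun ω => ∑ i ∈ Finset.range n, X i ω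
  have : IsProbabilityMeasure ν := Measure.isProbabilityMeasure_map hS.aemeasurable
  have hchar (t : ℝ) : charFun ν t = (((∫ ω, cos (t * X 0 ω)) ^ n : ℝ) : ℂ) := by
    rw [charFun_map_sum_range hmeas hindep hident,
      charFun_map_eq_ofReal_integral_cos (hmeas 0) hsymm, Complex.ofReal_pow]
  have him (t : ℝ) : (charFun ν t).im = 0 := by rw [hchar, Complex.ofReal_im]
  have hre : (fun t => (charFun ν t).re) = fun t => (∫ ω, cos (t * X 0 ω)) ^ n := by
    ext t; rw [hchar, Complex.ofReal_re]
  have hpos : ∀ t ∈ Icc (-(2 * π / lam)) (2 * π / lam), 0 ≤ (charFun ν t).re := by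
    have hHp : 2 * π / lam < p := by
      rw [div_lt_iff₀ hlam0]; rw [div_lt_iff₀ hp] at hlam; linarith
    intro t ht
    rw [hchar, Complex.ofReal_re]
    exact pow_nonneg (hφ t ⟨by linarith [ht.1], by linarith [ht.2]⟩) n
  have lower := mul_integral_re_charFun_le_levyConcentration him hlam0 hpos
  have upper := levyConcentration_le him hlam0 fun t ht =>
    hpos t (Icc_subset_Icc (by gcongr; linarith [pi_pos]) (by gcongr; linarith [pi_pos]) ht)
  rw [hre, levyConcentration_map hS] at lower upper
  refine ⟨?_, upper⟩
  rwa [mul_assoc, inv_mul_le_iff₀ hC0]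
end
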